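/- arXiv:2006.16980 — 6 statements merged into one kernel-verified Lean document; each statement's English description precedes it below -/
import Mathlib

section
/- Let ν be a finite Borel measure on ℝ^d, λ ∈ ℝ^d, α ∈ (0, d), R₀ > 0 and C₁ > 0. Suppose that ∫_{ℝ^d} ( ∫_{C_R(0)} ∫_{C_R(0)} e^{2πi⟨z−λ, t−s⟩} ds dt ) dν(z) ≤ C₁² R^{2(d−α)} for all R > R₀ (note the inner double integral is a nonnegative real number). Then there exists C > 0 such that ν(B_r(λ)) ≤ C r^{2α} for all 0 < r < 1/(2R₀), where B_r(λ) is the Euclidean ball of radius r about λ. -/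
/-!
The inner double integral is `|∫_{C_R(0)} e^{2πi⟨z-λ,t⟩} dt|² = ∏ᵢ (2R sinc(2πR(zᵢ-λᵢ)))²`, and by
Jordan's inequality `sin θ ≥ 2θ/π` on `[0, π/2]` every factor is at least `(4R/π)²` as soon as
`|zᵢ - λᵢ| ≤ 1/(4R)`. Integrating only over `B_r(λ)` with `R = 1/(4r)`, the hypothesis gives
`(πr)^{-2d} ν(B_r(λ)) ≤ C₁² (4r)^{-2(d-α)}`, i.e. `ν(B_r(λ)) ≲ r^{2α}`, whenever `r < 1/(4R₀)`;
for the remaining `r` the trivial bound `ν(B_r(λ)) ≤ ν(ℝ^d)` suffices.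
-/

open MeasureTheory

noncomputable section

/-- The cube `C_R(0) = [-R, R]^d` in `ℝ^d`. -/
def cube (d : ℕ) (R : ℝ) : Set (EuclideanSpace ℝ (Fin d)) :=
  {t | ∀ i, |t i| ≤ R}

open Real Set

theorem integral_Icc_cexp_two_pi_I_mul {R : ℝ} (hR : 0 < R) (x : ℝ) :
    ∫ u in Icc (-R) R, Complex.exp (2 * π * Complex.I * ((x * u : ℝ) : ℂ))
      = ((2 * R * sinc (2 * π * R * x) : ℝ) : ℂ) := by
  rw [integral_Icc_eq_integral_Ioc, ← intervalIntegral.integral_of_le (by linarith)]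
  rcases eq_or_ne x 0 with rfl | hx
  · simp only [zero_mul, Complex.ofReal_zero, mul_zero, Complex.exp_zero, sinc_zero,
      intervalIntegral.integral_const, sub_neg_eq_add, Complex.real_smul, Complex.ofReal_add,
      mul_one, Complex.ofReal_mul, Complex.ofReal_ofNat]
    ring
  have hc : 2 * π * Complex.I * x ≠ 0 := by simp [pi_ne_zero, hx]
  have hθ : 2 * π * R * x ≠ 0 := by positivity
  simp_rw [Complex.ofReal_mul, ← mul_assoc]
  rw [integral_exp_mul_complex hc, sinc_of_ne_zero hθ]
  have hR' : (R : ℂ) ≠ 0 := by exact_mod_cast hR.ne'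
  have hx' : (x : ℂ) ≠ 0 := by exact_mod_cast hx
  push_cast
  rw [Complex.sin]
  field_simp
  rw [Complex.I_sq]
  ring

theorem setIntegral_univ_pi_prod {ι : Type*} [Fintype ι] {𝕜 : Type*} [RCLike 𝕜]
    (s : ι → Set ℝ) (f : ι → ℝ → 𝕜) :
    ∫ y in univ.pi s, ∏ i, f i (y i) = ∏ i, ∫ u in s i, f i u := by
  rw [volume_pi, Measure.restrict_pi_pi, integral_fintype_prod_eq_prod]

theorem integral_cube_cexp {d : ℕ} {R : ℝ} (hR : 0 < R) (x : Fin d → ℝ) :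
    ∫ t in cube d R, Complex.exp (2 * π * Complex.I * ((∑ i, x i * t i : ℝ) : ℂ))
      = ∏ i, ((2 * R * sinc (2 * π * R * x i) : ℝ) : ℂ) := by
  have hcube : cube d R = WithLp.ofLp ⁻¹' univ.pi fun _ => Icc (-R) R := by
    ext t; simp only [cube, mem_ofPred_eq, mem_preimage, mem_univ_pi, mem_Icc, abs_le]
  rw [hcube, ← (PiLp.volume_preserving_toLp (Fin d)).setIntegral_preimage_emb
    (MeasurableEquiv.toLp 2 (Fin d → ℝ)).measurableEmbedding]
  simp_rw [← integral_Icc_cexp_two_pi_I_mul hR, ← setIntegral_univ_pi_prod, ← Complex.exp_sum]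
  simp only [Finset.mul_sum, Complex.ofReal_sum, Complex.ofReal_mul]
  rfl

/-- `|∫_{C_R(0)} e^{2πi⟨x,t⟩} dt|²`, by `integral_cube_cexp`. -/
def cubeKernel {d : ℕ} (R : ℝ) (x : Fin d → ℝ) : ℝ :=
  ∏ i, (2 * R * sinc (2 * π * R * x i)) ^ 2

theorem integral_cube_integral_cube_cexp {d : ℕ} {R : ℝ} (hR : 0 < R) (x : Fin d → ℝ) :
    ∫ t in cube d R, ∫ s in cube d R,
        Complex.exp (2 * π * Complex.I * ((∑ i, x i * (t i - s i) : ℝ) : ℂ))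
      = (cubeKernel R x : ℂ) := by
  have hsplit : ∀ t s : EuclideanSpace ℝ (Fin d),
      Complex.exp (2 * π * Complex.I * ((∑ i, x i * (t i - s i) : ℝ) : ℂ))
        = Complex.exp (2 * π * Complex.I * ((∑ i, x i * t i : ℝ) : ℂ))
          * Complex.exp (2 * π * Complex.I * ((∑ i, -x i * s i : ℝ) : ℂ)) := by
    intro t s
    rw [← Complex.exp_add, ← mul_add, ← Complex.ofReal_add, ← Finset.sum_add_distrib]
    simp only [mul_sub, neg_mul, ← sub_eq_add_neg]
  simp_rw [hsplit, integral_const_mul, integral_cube_cexp hR, integral_mul_const,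
    integral_cube_cexp hR, mul_neg, sinc_neg, cubeKernel, ← Finset.prod_mul_distrib]
  push_cast
  simp only [sq]

theorem cubeKernel_nonneg {d : ℕ} (R : ℝ) (x : Fin d → ℝ) : 0 ≤ cubeKernel R x :=
  Finset.prod_nonneg fun _ _ => sq_nonneg _

theorem cubeKernel_le {d : ℕ} (R : ℝ) (x : Fin d → ℝ) :
    cubeKernel R x ≤ (2 * R) ^ (2 * d) := by
  rw [pow_mul, ← Fin.prod_const]
  refine Finset.prod_le_prod (fun _ _ => sq_nonneg _) fun i _ => ?_
  rw [mul_pow]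
  exact mul_le_of_le_one_right (by positivity)
    ((sq_le_one_iff_abs_le_one _).mpr (abs_sinc_le_one _))

theorem two_div_pi_le_sinc {θ : ℝ} (hθ : |θ| ≤ π / 2) : 2 / π ≤ sinc θ := by
  rcases eq_or_ne θ 0 with rfl | hθ0
  · rw [sinc_zero, div_le_one pi_pos]; linarith [pi_gt_three]
  have hsinc_abs : sinc θ = sinc |θ| := by
    rcases abs_cases θ with ⟨h, _⟩ | ⟨h, _⟩ <;> simp [h]
  rw [hsinc_abs, sinc_of_ne_zero (abs_ne_zero.mpr hθ0), le_div_iff₀ (abs_pos.mpr hθ0)]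
  exact mul_le_sin (abs_nonneg θ) hθ

theorem le_cubeKernel {d : ℕ} {R : ℝ} (hR : 0 < R) {x : Fin d → ℝ}
    (hx : ∀ i, |x i| ≤ 1 / (4 * R)) :
    (4 * R / π) ^ (2 * d) ≤ cubeKernel R x := by
  rw [pow_mul, ← Fin.prod_const]
  refine Finset.prod_le_prod (fun _ _ => by positivity) fun i _ => ?_
  have hθ : |2 * π * R * x i| ≤ π / 2 := by
    rw [abs_mul, abs_of_pos (by positivity : 0 < 2 * π * R)]
    calc 2 * π * R * |x i| ≤ 2 * π * R * (1 / (4 * R)) := by gcongr; exact hx i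
      _ = π / 2 := by field_simp; ring
  gcongr
  calc 4 * R / π = 2 * R * (2 / π) := by ring
    _ ≤ 2 * R * sinc (2 * π * R * x i) := by gcongr; exact two_div_pi_le_sinc hθ

theorem continuous_cubeKernel {d : ℕ} (R : ℝ) : Continuous (cubeKernel (d := d) R) := by
  unfold cubeKernel; fun_prop

section Measure

variable {d : ℕ} {ν : Measure (EuclideanSpace ℝ (Fin d))} (lam : EuclideanSpace ℝ (Fin d))

theorem re_integral_integral_cube_cexp {R : ℝ} (hR : 0 < R) :
    (∫ z, (∫ t in cube d R, ∫ s in cube d R,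
        Complex.exp (2 * π * Complex.I * ((∑ i, (z i - lam i) * (t i - s i) : ℝ) : ℂ))) ∂ν).re
      = ∫ z, cubeKernel R (fun i => z i - lam i) ∂ν := by
  have hkernel : (fun z : EuclideanSpace ℝ (Fin d) => ∫ t in cube d R, ∫ s in cube d R,
      Complex.exp (2 * π * Complex.I * ((∑ i, (z i - lam i) * (t i - s i) : ℝ) : ℂ)))
        = fun z => ((cubeKernel R fun i => z i - lam i : ℝ) : ℂ) :=
    funext fun z => integral_cube_integral_cube_cexp hR fun i => z i - lam i
  rw [hkernel, integral_complex_ofReal, Complex.ofReal_re]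

variable [IsFiniteMeasure ν]

theorem integrable_cubeKernel_sub (R : ℝ) :
    Integrable (fun z => cubeKernel R fun i => z i - lam i) ν := by
  refine Integrable.of_bound ((continuous_cubeKernel R).comp (by fun_prop)).aestronglyMeasurable
    ((2 * R) ^ (2 * d)) (ae_of_all _ fun z => ?_)
  rw [norm_of_nonneg (cubeKernel_nonneg R _)]
  exact cubeKernel_le R _

theorem measureReal_ball_le_integral_cubeKernel {R r : ℝ} (hR : 0 < R) (hr : r ≤ 1 / (4 * R)) :
    (4 * R / π) ^ (2 * d) * ν.real (Metric.ball lam r)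
      ≤ ∫ z, cubeKernel R (fun i => z i - lam i) ∂ν := by
  have hball : ∀ z ∈ Metric.ball lam r,
      (4 * R / π) ^ (2 * d) ≤ cubeKernel R fun i => z i - lam i :=
    fun z hz => le_cubeKernel hR fun i =>
      ((Real.dist_eq _ _ ▸ PiLp.dist_apply_le z lam i).trans_lt hz).le.trans hr
  calc (4 * R / π) ^ (2 * d) * ν.real (Metric.ball lam r)
      = ∫ _ in Metric.ball lam r, (4 * R / π) ^ (2 * d) ∂ν := by
        rw [setIntegral_const, smul_eq_mul, mul_comm]
    _ ≤ ∫ z in Metric.ball lam r, cubeKernel R (fun i => z i - lam i) ∂ν :=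
        setIntegral_mono_on integrableOn_const (integrable_cubeKernel_sub lam R).integrableOn
          Metric.isOpen_ball.measurableSet hball
    _ ≤ ∫ z, cubeKernel R (fun i => z i - lam i) ∂ν :=
        setIntegral_le_integral (integrable_cubeKernel_sub lam R)
          (ae_of_all _ fun z => cubeKernel_nonneg R _)

theorem measureReal_ball_le_of_integral_cubeKernel_le {α C₁ R₀ : ℝ} (hR₀ : 0 < R₀)
    (hbound : ∀ R, R₀ < R →
      ∫ z, cubeKernel R (fun i => z i - lam i) ∂ν ≤ C₁ ^ 2 * R ^ (2 * ((d : ℝ) - α)))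
    {r : ℝ} (hr : 0 < r) (hrR₀ : r < 1 / (4 * R₀)) :
    ν.real (Metric.ball lam r) ≤ C₁ ^ 2 * (π / 4) ^ (2 * d) * (4 * r) ^ (2 * α) := by
  set R := (4 * r)⁻¹ with hRdef
  have hR : 0 < R := by positivity
  have hRR₀ : R₀ < R := by
    rw [lt_inv_comm₀ hR₀ (by positivity), ← one_div]
    rw [lt_div_iff₀ (by positivity)] at hrR₀ ⊢
    linarith
  have hrR : r = 1 / (4 * R) := by rw [hRdef]; field_simp
  have hrpow : R ^ (2 * ((d : ℝ) - α))
      = (4 * R / π) ^ (2 * d) * ((π / 4) ^ (2 * d) * (4 * r) ^ (2 * α)) := by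
    rw [← mul_assoc, ← mul_pow, show 4 * R / π * (π / 4) = R by field_simp, mul_sub,
      rpow_sub hR, show 2 * (d : ℝ) = ((2 * d : ℕ) : ℝ) by push_cast; ring, rpow_natCast, hRdef,
      inv_rpow (by positivity), div_inv_eq_mul]
  have := (measureReal_ball_le_integral_cubeKernel lam hR hrR.le).trans (hbound R hRR₀)
  rw [hrpow, mul_left_comm] at this
  have := le_of_mul_le_mul_left this (by positivity)
  linarith

theorem measureReal_ball_le_add_rpow_of_integral_cubeKernel_le {α C₁ R₀ : ℝ} (hα : 0 < α)
    (hR₀ : 0 < R₀)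
    (hbound : ∀ R, R₀ < R →
      ∫ z, cubeKernel R (fun i => z i - lam i) ∂ν ≤ C₁ ^ 2 * R ^ (2 * ((d : ℝ) - α)))
    {r : ℝ} (hr : 0 < r) :
    ν.real (Metric.ball lam r)
      ≤ C₁ ^ 2 * (π / 4) ^ (2 * d) * (4 * r) ^ (2 * α) + ν.real univ * (4 * R₀ * r) ^ (2 * α) := by
  rcases lt_or_ge r (1 / (4 * R₀)) with hsmall | hlarge
  · have := measureReal_ball_le_of_integral_cubeKernel_le lam hR₀ hbound hr hsmall
    have : 0 ≤ ν.real univ * (4 * R₀ * r) ^ (2 * α) := by positivity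
    linarith
  · have h1 : 1 ≤ (4 * R₀ * r) ^ (2 * α) :=
      one_le_rpow (by rwa [div_le_iff₀' (by positivity)] at hlarge) (by positivity)
    calc ν.real (Metric.ball lam r) ≤ ν.real univ := measureReal_mono (subset_univ _)
      _ ≤ ν.real univ * (4 * R₀ * r) ^ (2 * α) := le_mul_of_one_le_right measureReal_nonneg h1
      _ ≤ _ := le_add_of_nonneg_left (by positivity)

end Measure

theorem measure_ball_bound_of_kernel_integral_bound_general
    {d : ℕ}
    (ν : Measure (EuclideanSpace ℝ (Fin d))) [IsFiniteMeasure ν]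
    (lam : EuclideanSpace ℝ (Fin d)) (α : ℝ) (hα : 0 < α)
    (R₀ C₁ : ℝ) (hR₀ : 0 < R₀) (hC₁ : 0 < C₁)
    (hbound : ∀ R, R₀ < R →
      (∫ z, (∫ t in cube d R, ∫ s in cube d R,
          Complex.exp (2 * Real.pi * Complex.I
            * ((∑ i, (z i - lam i) * (t i - s i) : ℝ) : ℂ))) ∂ν).re
        ≤ C₁ ^ 2 * R ^ (2 * ((d : ℝ) - α))) :
    ∃ C > 0, ∀ r : ℝ, 0 < r → r < 1 / (2 * R₀) →
      ν (Metric.ball lam r) ≤ ENNReal.ofReal (C * r ^ (2 * α)) := by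
  have hkernel (R : ℝ) (hR : R₀ < R) :
      ∫ z, cubeKernel R (fun i => z i - lam i) ∂ν ≤ C₁ ^ 2 * R ^ (2 * ((d : ℝ) - α)) :=
    re_integral_integral_cube_cexp lam (hR₀.trans hR) ▸ hbound R hR
  refine ⟨C₁ ^ 2 * (π / 4) ^ (2 * d) * 4 ^ (2 * α) + ν.real univ * (4 * R₀) ^ (2 * α),
    by positivity, fun r hr _ => ?_⟩
  rw [← ofReal_measureReal]
  refine ENNReal.ofReal_le_ofReal ?_
  have hsplit : (C₁ ^ 2 * (π / 4) ^ (2 * d) * 4 ^ (2 * α) + ν.real univ * (4 * R₀) ^ (2 * α))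
      * r ^ (2 * α)
      = C₁ ^ 2 * (π / 4) ^ (2 * d) * (4 * r) ^ (2 * α) + ν.real univ * (4 * R₀ * r) ^ (2 * α) := by
    rw [mul_rpow (by norm_num) hr.le, mul_rpow (by positivity) hr.le]; ring
  rw [hsplit]
  exact measureReal_ball_le_add_rpow_of_integral_cubeKernel_le lam hα hR₀ hkernel hr

/-- If the integral against `ν` of the double cube integral of `e^{2πi⟨z-λ, t-s⟩}`
(a nonnegative real number) is at most `C₁² R^{2(d-α)}` for all `R > R₀`, then
`ν(B_r(λ)) ≤ C r^{2α}` for all `0 < r < 1/(2R₀)`. -/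
theorem measure_ball_bound_of_kernel_integral_bound
    {d : ℕ} (hd : 1 ≤ d)
    (ν : Measure (EuclideanSpace ℝ (Fin d))) [IsFiniteMeasure ν]
    (lam : EuclideanSpace ℝ (Fin d)) (α : ℝ) (hα : 0 < α) (hαd : α < d)
    (R₀ C₁ : ℝ) (hR₀ : 0 < R₀) (hC₁ : 0 < C₁)
    (hbound : ∀ R, R₀ < R →
      (∫ z, (∫ t in cube d R, ∫ s in cube d R,
          Complex.exp (2 * Real.pi * Complex.I
            * ((∑ i, (z i - lam i) * (t i - s i) : ℝ) : ℂ))) ∂ν).re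
        ≤ C₁ ^ 2 * R ^ (2 * ((d : ℝ) - α))) :
    ∃ C > 0, ∀ r : ℝ, 0 < r → r < 1 / (2 * R₀) →
      ν (Metric.ball lam r) ≤ ENNReal.ofReal (C * r ^ (2 * α)) :=
  measure_ball_bound_of_kernel_integral_bound_general ν lam α hα R₀ C₁ hR₀ hC₁ hbound
end
end

section
/- Let r ≥ 1 and let a_1, …, a_k ∈ ℤ^r be vectors whose integer span is all of ℤ^r. Then there exists a constant C > 0 such that for every z ∈ ℝ^r, C · dist(z, ℤ^r) ≤ max_{1 ≤ j ≤ k} ‖⟨a_j, z⟩‖_{ℝ/ℤ}, where dist(z, ℤ^r) = min_{m ∈ ℤ^r} ‖z − m‖ is the Euclidean distance from z to the integer lattice. -/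
/-!
Since the `a j` span `ℤ^r`, every coordinate `z i` is an integer combination
`∑ j, c i j * ⟨a j, z⟩`. As `distToInt` is subadditive and `distToInt (n * x) ≤ |n| * distToInt x`
for `n : ℤ`, this bounds `distToInt (z i)` by `∑ j, |c i j|` times the maximum of the
`distToInt ⟨a j, z⟩`; rounding every coordinate of `z` gives a lattice point at Euclidean distance
at most `∑ i, distToInt (z i)`.
-/

open MeasureTheory

noncomputable section

/-- Distance from a real number to the nearest integer, `‖ω‖_{ℝ/ℤ}`. -/
def distToInt (x : ℝ) : ℝ := |x - round x|

lemma distToInt_nonneg (x : ℝ) : 0 ≤ distToInt x := abs_nonneg _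

lemma distToInt_le_abs_sub_intCast (x : ℝ) (m : ℤ) : distToInt x ≤ |x - m| := round_le x m

lemma distToInt_add_le (x y : ℝ) : distToInt (x + y) ≤ distToInt x + distToInt y :=
  calc distToInt (x + y) ≤ |x + y - ↑(round x + round y)| := distToInt_le_abs_sub_intCast _ _
    _ = |(x - round x) + (y - round y)| := by push_cast; ring_nf
    _ ≤ distToInt x + distToInt y := abs_add_le _ _

lemma distToInt_intCast_mul_le (n : ℤ) (x : ℝ) : distToInt (n * x) ≤ |(n : ℝ)| * distToInt x :=
  calc distToInt (n * x) ≤ |n * x - ↑(n * round x)| := distToInt_le_abs_sub_intCast _ _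
    _ = |(n : ℝ)| * distToInt x := by rw [distToInt, ← abs_mul]; push_cast; ring_nf

lemma distToInt_sum_intCast_mul_le {κ : Type*} (s : Finset κ) (c : κ → ℤ) (x : κ → ℝ) :
    distToInt (∑ j ∈ s, c j * x j) ≤ ∑ j ∈ s, |(c j : ℝ)| * distToInt (x j) :=
  (Finset.le_sum_of_subadditive distToInt (by simp [distToInt]) distToInt_add_le s _).trans
    (Finset.sum_le_sum fun j _ => distToInt_intCast_mul_le (c j) (x j))

section Lattice

variable {ι : Type*} [Fintype ι]

lemma EuclideanSpace.norm_le_sum_abs (x : EuclideanSpace ℝ ι) : ‖x‖ ≤ ∑ i, |x i| := by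
  rw [EuclideanSpace.norm_eq, Real.sqrt_le_left (Finset.sum_nonneg fun i _ => abs_nonneg _)]
  exact Finset.sum_sq_le_sq_sum_of_nonneg fun i _ => abs_nonneg _

lemma infDist_intLattice_le_sum_distToInt (z : EuclideanSpace ℝ ι) :
    Metric.infDist z
        (Set.range fun m : ι → ℤ => (WithLp.toLp 2 (fun i => (m i : ℝ)) : EuclideanSpace ℝ ι))
      ≤ ∑ i, distToInt (z i) :=
  calc Metric.infDist z _ ≤ dist z (WithLp.toLp 2 fun i => ((round (z i) : ℤ) : ℝ)) :=
        Metric.infDist_le_dist_of_mem (Set.mem_range_self fun i => round (z i))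
    _ ≤ ∑ i, distToInt (z i) := by
        rw [dist_eq_norm]
        exact EuclideanSpace.norm_le_sum_abs _

variable {κ : Type*} [Fintype κ]

lemma sum_intCast_mul_sum_eq (a : κ → ι → ℤ) (c : κ → ℤ) (z : ι → ℝ) :
    ∑ j, (c j : ℝ) * ∑ i, (a j i : ℝ) * z i = ∑ i, ((∑ j, c j • a j) i : ℝ) * z i := by
  simp only [Finset.sum_apply, Pi.smul_apply, smul_eq_mul, Int.cast_sum, Int.cast_mul,
    Finset.mul_sum, Finset.sum_mul, mul_assoc]
  exact Finset.sum_comm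

lemma exists_apply_eq_sum_intCast_mul [DecidableEq ι] {a : κ → ι → ℤ}
    (hspan : Submodule.span ℤ (Set.range a) = ⊤) (i : ι) :
    ∃ c : κ → ℤ, ∀ z : ι → ℝ, z i = ∑ j, (c j : ℝ) * ∑ l, (a j l : ℝ) * z l := by
  obtain ⟨c, hc⟩ := (Submodule.mem_span_range_iff_exists_fun ℤ).mp
    (hspan ▸ Submodule.mem_top : Pi.single i 1 ∈ Submodule.span ℤ (Set.range a))
  refine ⟨c, fun z => ?_⟩
  rw [sum_intCast_mul_sum_eq, hc]
  simp [Pi.single_apply]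

lemma exists_sum_distToInt_le_mul_iSup {a : κ → ι → ℤ}
    (hspan : Submodule.span ℤ (Set.range a) = ⊤) :
    ∃ B ≥ 0, ∀ z : ι → ℝ,
      ∑ i, distToInt (z i) ≤ B * ⨆ j, distToInt (∑ l, (a j l : ℝ) * z l) := by
  classical
  choose c hc using exists_apply_eq_sum_intCast_mul hspan
  refine ⟨∑ i, ∑ j, |(c i j : ℝ)|, by positivity, fun z => ?_⟩
  set S := ⨆ j, distToInt (∑ l, (a j l : ℝ) * z l)
  have hle : ∀ j, distToInt (∑ l, (a j l : ℝ) * z l) ≤ S :=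
    le_ciSup (Set.finite_range _).bddAbove
  calc ∑ i, distToInt (z i)
      ≤ ∑ i, ∑ j, |(c i j : ℝ)| * distToInt (∑ l, (a j l : ℝ) * z l) :=
        Finset.sum_le_sum fun i _ => hc i z ▸ distToInt_sum_intCast_mul_le _ _ _
    _ ≤ ∑ i, ∑ j, |(c i j : ℝ)| * S := by gcongr with i _ j _; exact hle j
    _ = (∑ i, ∑ j, |(c i j : ℝ)|) * S := by simp only [Finset.sum_mul]

end Lattice

theorem dist_to_lattice_le_max_inner_distToInt_general
    {r : ℕ} {k : ℕ}
    (a : Fin k → Fin r → ℤ)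
    (hspan : Submodule.span ℤ (Set.range a) = ⊤) :
    ∃ C > 0, ∀ z : EuclideanSpace ℝ (Fin r),
      C * Metric.infDist z
          (Set.range fun m : Fin r → ℤ => (WithLp.toLp 2 (fun i => (m i : ℝ)) : EuclideanSpace ℝ (Fin r)))
        ≤ ⨆ j : Fin k, distToInt (∑ i, (a j i : ℝ) * z i) := by
  obtain ⟨B, hB, hsum⟩ := exists_sum_distToInt_le_mul_iSup hspan
  refine ⟨(B + 1)⁻¹, by positivity, fun z => ?_⟩
  have hS : 0 ≤ ⨆ j : Fin k, distToInt (∑ i, (a j i : ℝ) * z i) :=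
    Real.iSup_nonneg fun j => distToInt_nonneg _
  rw [inv_mul_le_iff₀ (by positivity)]
  calc Metric.infDist z _ ≤ B * ⨆ j : Fin k, distToInt (∑ i, (a j i : ℝ) * z i) :=
        (infDist_intLattice_le_sum_distToInt z).trans (hsum z)
    _ ≤ (B + 1) * ⨆ j : Fin k, distToInt (∑ i, (a j i : ℝ) * z i) := by gcongr; linarith

/-- If the integer vectors `a_1, …, a_k` span `ℤ^r`, then there is a constant `C > 0` such
that for every `z ∈ ℝ^r`, `C · dist(z, ℤ^r) ≤ max_j ‖⟨a_j, z⟩‖_{ℝ/ℤ}`. -/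
theorem dist_to_lattice_le_max_inner_distToInt
    {r : ℕ} (hr : 1 ≤ r) {k : ℕ} (hk : 1 ≤ k)
    (a : Fin k → Fin r → ℤ)
    (hspan : Submodule.span ℤ (Set.range a) = ⊤) :
    ∃ C > 0, ∀ z : EuclideanSpace ℝ (Fin r),
      C * Metric.infDist z
          (Set.range fun m : Fin r → ℤ => (WithLp.toLp 2 (fun i => (m i : ℝ)) : EuclideanSpace ℝ (Fin r)))
        ≤ ⨆ j : Fin k, distToInt (∑ i, (a j i : ℝ) * z i) :=
  dist_to_lattice_le_max_inner_distToInt_general a hspan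
end
end

section
/- Let n ≥ 2, let θ_1, …, θ_n be real numbers, and let p ≠ q be two indices in {1, …, n}. Then |∑_{k=1}^n e^{2πiθ_k}| ≤ n − (1/2)‖θ_p − θ_q‖²_{ℝ/ℤ}. -/
noncomputable section

/-!
All terms except the `p`-th and `q`-th contribute at most `1` each. For those two,
`|e(a) + e(b)| = 2 |cos π(a - b)|`, and `cos π(a - b) = ± cos πy` with `y = a - b - round (a - b)`,
`|y| ≤ 1/2`; on that range Jordan's inequality gives `0 ≤ cos πy ≤ 1 - 2y²`.
-/

open Real

theorem abs_cos_pi_mul_le (x : ℝ) : |cos (π * x)| ≤ 1 - 2 * distToInt x ^ 2 := by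
  set y := x - round x
  have hd : distToInt x = |y| := rfl
  have hy : |y| ≤ 1 / 2 := abs_sub_round x
  have hπy : |π * y| ≤ π / 2 := by
    rw [abs_mul, abs_of_pos pi_pos]
    nlinarith [pi_pos]
  have hperiodic : |cos (π * x)| = |cos (π * y)| := by
    rw [show π * x = π * y + round x * π by ring, cos_add_int_mul_pi, abs_mul, abs_neg_one_zpow,
      one_mul]
  have hjordan := cos_le_one_sub_mul_cos_sq (hπy.trans (by linarith [pi_pos]))
  rw [hperiodic, hd, sq_abs,
    abs_of_nonneg (cos_nonneg_of_neg_pi_div_two_le_of_le (abs_le.1 hπy).1 (abs_le.1 hπy).2)]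
  convert hjordan using 2
  field_simp

theorem norm_exp_two_pi_I_add_exp (a b : ℝ) :
    ‖Complex.exp (2 * π * Complex.I * a) + Complex.exp (2 * π * Complex.I * b)‖
      = 2 * |cos (π * (a - b))| := by
  have hfactor : Complex.exp (2 * π * Complex.I * a) + Complex.exp (2 * π * Complex.I * b) =
      Complex.exp ((π * (a + b) : ℝ) * Complex.I) * (2 * cos (π * (a - b)) : ℝ) := by
    push_cast
    rw [Complex.two_cos, mul_add, ← Complex.exp_add, ← Complex.exp_add]
    ring_nf
  rw [hfactor, norm_mul, Complex.norm_exp_ofReal_mul_I, one_mul, Complex.norm_real,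
    Real.norm_eq_abs, abs_mul, abs_two]

theorem norm_sum_le_norm_add_add_sum_norm_sub {ι E : Type*} [Fintype ι]
    [SeminormedAddCommGroup E] (f : ι → E) {p q : ι} (hpq : p ≠ q) :
    ‖∑ i, f i‖ ≤ ‖f p + f q‖ + (∑ i, ‖f i‖ - ‖f p‖ - ‖f q‖) := by
  classical
  rw [← Finset.sum_compl_add_sum {p, q} f, ← Finset.sum_compl_add_sum {p, q} (‖f ·‖),
    Finset.sum_pair hpq, Finset.sum_pair hpq]
  calc ‖∑ i ∈ {p, q}ᶜ, f i + (f p + f q)‖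
      ≤ ‖∑ i ∈ {p, q}ᶜ, f i‖ + ‖f p + f q‖ := norm_add_le _ _
    _ ≤ ∑ i ∈ {p, q}ᶜ, ‖f i‖ + ‖f p + f q‖ := by grw [norm_sum_le]
    _ = _ := by ring

theorem abs_sum_exp_le_general {n : ℕ} (θ : Fin n → ℝ) (p q : Fin n) (hpq : p ≠ q) :
    ‖∑ k, Complex.exp (2 * Real.pi * Complex.I * ((θ k : ℝ) : ℂ))‖
      ≤ n - (1 / 2) * distToInt (θ p - θ q) ^ 2 := by
  have hunit (k : Fin n) : ‖Complex.exp (2 * π * Complex.I * (θ k : ℂ))‖ = 1 := by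
    rw [show 2 * π * Complex.I * (θ k : ℂ) = (2 * π * θ k : ℝ) * Complex.I by push_cast; ring,
      Complex.norm_exp_ofReal_mul_I]
  calc _ ≤ _ := norm_sum_le_norm_add_add_sum_norm_sub _ hpq
    _ = 2 * |cos (π * (θ p - θ q))| + (n - 2) := by
        simp only [norm_exp_two_pi_I_add_exp, hunit, Finset.sum_const, Finset.card_univ,
          Fintype.card_fin, nsmul_eq_mul, mul_one]
        ring
    _ ≤ n - (1 / 2) * distToInt (θ p - θ q) ^ 2 := by
        linarith [abs_cos_pi_mul_le (θ p - θ q), sq_nonneg (distToInt (θ p - θ q))]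

/-- For `n ≥ 2` phases and two distinct indices `p ≠ q`,
`|∑_k e^{2πiθ_k}| ≤ n - (1/2)‖θ_p - θ_q‖²_{ℝ/ℤ}`. -/
theorem abs_sum_exp_le {n : ℕ} (hn : 2 ≤ n) (θ : Fin n → ℝ) (p q : Fin n) (hpq : p ≠ q) :
    ‖∑ k, Complex.exp (2 * Real.pi * Complex.I * ((θ k : ℝ) : ℂ))‖
      ≤ n - (1 / 2) * distToInt (θ p - θ q) ^ 2 :=
  abs_sum_exp_le_general θ p q hpq
end
end

section
/- Let d ≥ 1, let g : ℝ^d → ℂ be continuously differentiable, let λ ∈ ℝ^d, and let ℓ ∈ {1, …, d} be an index with λ_ℓ ≠ 0. Then for every R > 0, |∫_{C_R(0)} e^{2πi⟨λ,t⟩} g(t) dt| ≤ (1/(2π|λ_ℓ|)) · ( 2(2R)^{d−1} · sup_{t ∈ C_R(0)} |g(t)| + |∫_{C_R(0)} e^{2πi⟨λ,t⟩} (∂g/∂t_ℓ)(t) dt| ). -/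
/-!
Write `e(t) = exp (2πi⟨λ, t⟩)`. The product rule gives `∂_ℓ (e g) = 2πi λ_ℓ e g + e ∂_ℓ g`, and by
the divergence theorem in the single direction `ℓ`, the integral of `∂_ℓ (e g)` over the cube is
the difference of the integrals of `e g` over the two faces `t_ℓ = ± R`. Since `|e| = 1`, each face
integral is at most `(2R)^(d-1) sup |g|`; solving for `2πi λ_ℓ ∫ e g` gives the estimate.
-/

open MeasureTheory

noncomputable section

open Set

theorem integral_Icc_fderiv_apply_single {E : Type*} [NormedAddCommGroup E] [NormedSpace ℝ E]
    {n : ℕ} {a b : Fin (n + 1) → ℝ} (hab : a ≤ b) {f : (Fin (n + 1) → ℝ) → E}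
    {f' : (Fin (n + 1) → ℝ) → (Fin (n + 1) → ℝ) →L[ℝ] E} (i : Fin (n + 1))
    (hf : ContinuousOn f (Icc a b))
    (hf' : ∀ x ∈ pi univ fun j ↦ Ioo (a j) (b j), HasFDerivAt f (f' x) x)
    (hi : IntegrableOn (fun x ↦ f' x (Pi.single i 1)) (Icc a b)) :
    ∫ x in Icc a b, f' x (Pi.single i 1) =
      (∫ y in Icc (a ∘ i.succAbove) (b ∘ i.succAbove), f (i.insertNth (b i) y)) -
        ∫ y in Icc (a ∘ i.succAbove) (b ∘ i.succAbove), f (i.insertNth (a i) y) := by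
  have hsum : ∀ x, ∑ j, Pi.single (M := fun _ ↦ _) i f' j x (Pi.single j 1) =
      f' x (Pi.single i 1) := fun x ↦
    (Fintype.sum_eq_single i fun j hj ↦ by simp [Pi.single_eq_of_ne hj]).trans (by simp)
  have hdiv := integral_divergence_of_hasFDerivAt_off_countable' a b hab
    (Pi.single (M := fun _ ↦ _) i f) (Pi.single (M := fun _ ↦ _) i f') ∅ countable_empty
    (fun j ↦ by
      rcases eq_or_ne j i with rfl | hj
      · simpa using hf
      · rw [Pi.single_eq_of_ne hj]; exact continuousOn_const)
    (fun x hx j ↦ by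
      rcases eq_or_ne j i with rfl | hj
      · simpa using hf' x (by simpa using hx)
      · rw [Pi.single_eq_of_ne hj, Pi.single_eq_of_ne hj]; exact hasFDerivAt_const 0 x)
    (by simpa only [hsum] using hi)
  simp only [hsum] at hdiv
  rw [hdiv, Fintype.sum_eq_single i fun j hj ↦ by simp [Pi.single_eq_of_ne hj]]
  simp

theorem IsCompact.le_biSup_of_continuousOn {X α : Type*} [TopologicalSpace X]
    [ConditionallyCompleteLinearOrder α] [TopologicalSpace α] [OrderTopology α] {s : Set X}
    (hs : IsCompact s) {f : X → α} (hf : ContinuousOn f s) {x : X} (hx : x ∈ s) :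
    f x ≤ ⨆ y ∈ s, f y :=
  le_ciSup₂ (f := fun y (_ : y ∈ s) ↦ f y) ((hs.bddAbove_image hf).mono
    (by rintro _ ⟨_, ⟨y, rfl⟩, ⟨hy, rfl⟩⟩; exact ⟨y, hy, rfl⟩)) x hx

theorem fderiv_cexp_mul_apply {V : Type*} [NormedAddCommGroup V] [NormedSpace ℝ V]
    {g : V → ℂ} {x : V} (hg : DifferentiableAt ℝ g x) (c : ℂ) (A : V →L[ℝ] ℝ) (v : V) :
    fderiv ℝ (fun y ↦ Complex.exp (c * A y) * g y) x v =
      c * A v * (Complex.exp (c * A x) * g x) + Complex.exp (c * A x) * fderiv ℝ g x v := by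
  have hphase : HasFDerivAt (fun y ↦ c * (A y : ℂ)) (c • Complex.ofRealCLM.comp A) x :=
    (Complex.ofRealCLM.hasFDerivAt.comp x A.hasFDerivAt).const_mul c
  rw [HasFDerivAt.fderiv (f := fun y ↦ Complex.exp (c * A y) * g y)
    (hphase.cexp.mul hg.hasFDerivAt)]
  simp only [add_apply, smul_apply, smul_eq_mul,
    ContinuousLinearMap.comp_apply, Complex.ofRealCLM_apply]
  ring

theorem toLp_preimage_cube (d : ℕ) (R : ℝ) :
    WithLp.toLp 2 ⁻¹' cube d R = Icc (fun _ ↦ -R) (fun _ ↦ R) := by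
  ext x
  simp [cube, Pi.le_def, abs_le, forall_and]

theorem isCompact_cube (d : ℕ) (R : ℝ) : IsCompact (cube d R) := by
  rw [← image_preimage_eq (cube d R) (WithLp.toLp_surjective 2), toLp_preimage_cube]
  exact isCompact_Icc.image (PiLp.continuous_toLp 2 _)

section Cube

variable {E : Type*} [NormedAddCommGroup E] [NormedSpace ℝ E] {n : ℕ}

theorem setIntegral_cube_eq_setIntegral_Icc (d : ℕ) (R : ℝ) (φ : EuclideanSpace ℝ (Fin d) → E) :
    ∫ t in cube d R, φ t = ∫ x in Icc (fun _ ↦ -R) (fun _ ↦ R), φ (WithLp.toLp 2 x) := by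
  rw [← toLp_preimage_cube]
  exact ((PiLp.volume_preserving_toLp (Fin d)).setIntegral_preimage_emb
    (MeasurableEquiv.toLp 2 (Fin d → ℝ)).measurableEmbedding φ _).symm

def cubeFaceIntegral (R : ℝ) (ℓ : Fin (n + 1)) (v : ℝ) (F : EuclideanSpace ℝ (Fin (n + 1)) → E) :
    E :=
  ∫ y in Icc (fun _ ↦ -R) (fun _ ↦ R), F (WithLp.toLp 2 (ℓ.insertNth v y))

theorem setIntegral_cube_fderiv_apply_single {R : ℝ} (hR : 0 ≤ R)
    {F : EuclideanSpace ℝ (Fin (n + 1)) → E} (hF : ContDiff ℝ 1 F) (ℓ : Fin (n + 1)) :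
    ∫ t in cube (n + 1) R, fderiv ℝ F t (EuclideanSpace.single ℓ 1) =
      cubeFaceIntegral R ℓ R F - cubeFaceIntegral R ℓ (-R) F := by
  let L := (PiLp.continuousLinearEquiv 2 ℝ fun _ : Fin (n + 1) ↦ ℝ).symm
  have hL : ∀ x, HasFDerivAt (F ∘ L) ((fderiv ℝ F (L x)).comp (L : _ →L[ℝ] _)) x := fun x ↦
    (hF.differentiable one_ne_zero (L x)).hasFDerivAt.comp x L.hasFDerivAt
  rw [setIntegral_cube_eq_setIntegral_Icc]
  refine integral_Icc_fderiv_apply_single (fun _ ↦ by linarith) ℓ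
    (hF.continuous.comp L.continuous).continuousOn (fun x _ ↦ hL x) ?_
  exact (((hF.continuous_fderiv one_ne_zero).comp L.continuous).clm_apply
    continuous_const).integrableOn_Icc

theorem norm_cubeFaceIntegral_le {F : EuclideanSpace ℝ (Fin (n + 1)) → E} {R S v : ℝ}
    (hF : ∀ t ∈ cube (n + 1) R, ‖F t‖ ≤ S) (hv : |v| ≤ R) (ℓ : Fin (n + 1)) :
    ‖cubeFaceIntegral R ℓ v F‖ ≤ (2 * R) ^ n * S := by
  have hR : -R ≤ R := by linarith [abs_nonneg v, abs_le.1 hv]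
  have hvol : volume.real (Icc (fun _ : Fin n ↦ -R) (fun _ ↦ R)) = (2 * R) ^ n := by
    rw [measureReal_def, Real.volume_Icc_pi_toReal fun _ ↦ hR]
    simp [two_mul]
  calc ‖cubeFaceIntegral R ℓ v F‖ ≤ S * volume.real (Icc (fun _ : Fin n ↦ -R) (fun _ ↦ R)) :=
        norm_setIntegral_le_of_norm_le_const measure_Icc_lt_top fun y hy ↦ hF _ (by
          rw [← mem_preimage, toLp_preimage_cube]
          exact Fin.insertNth_mem_Icc.2 ⟨abs_le.1 hv, hy⟩)
    _ = (2 * R) ^ n * S := by rw [hvol, mul_comm]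

end Cube

theorem mul_setIntegral_cube_cexp_mul {n : ℕ} {R : ℝ} (hR : 0 ≤ R)
    {g : EuclideanSpace ℝ (Fin (n + 1)) → ℂ} (hg : ContDiff ℝ 1 g) (c : ℂ)
    (A : EuclideanSpace ℝ (Fin (n + 1)) →L[ℝ] ℝ) (ℓ : Fin (n + 1)) :
    c * A (EuclideanSpace.single ℓ 1) * ∫ t in cube (n + 1) R, Complex.exp (c * A t) * g t =
      cubeFaceIntegral R ℓ R (fun t ↦ Complex.exp (c * A t) * g t)
        - cubeFaceIntegral R ℓ (-R) (fun t ↦ Complex.exp (c * A t) * g t)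
        - ∫ t in cube (n + 1) R,
            Complex.exp (c * A t) * fderiv ℝ g t (EuclideanSpace.single ℓ 1) := by
  have hF : ContDiff ℝ 1 fun t ↦ Complex.exp (c * A t) * g t :=
    ((contDiff_const.mul (Complex.ofRealCLM.contDiff.comp A.contDiff)).cexp).mul hg
  have hint : ∀ {φ : EuclideanSpace ℝ (Fin (n + 1)) → ℂ}, Continuous φ →
      IntegrableOn φ (cube (n + 1) R) :=
    fun hφ ↦ hφ.continuousOn.integrableOn_compact (isCompact_cube _ _)
  rw [← setIntegral_cube_fderiv_apply_single hR hF, ← integral_const_mul, eq_sub_iff_add_eq,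
    ← integral_add (hint (by fun_prop)) (hint (by fun_prop))]
  congr 1
  ext t
  rw [fderiv_cexp_mul_apply (hg.differentiable one_ne_zero t)]

theorem twisted_integral_integration_by_parts_general
    {d : ℕ} (g : EuclideanSpace ℝ (Fin d) → ℂ)
    (hg : ContDiff ℝ 1 g) (lam : EuclideanSpace ℝ (Fin d)) (ℓ : Fin d)
    (hℓ : lam ℓ ≠ 0) (R : ℝ) (hR : 0 < R) :
    ‖∫ t in cube d R,
        Complex.exp (2 * Real.pi * Complex.I * ((∑ i, lam i * t i : ℝ) : ℂ)) * g t‖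
      ≤ (1 / (2 * Real.pi * |lam ℓ|)) *
        (2 * (2 * R) ^ (d - 1) * (⨆ t ∈ cube d R, ‖g t‖)
          + ‖∫ t in cube d R,
              Complex.exp (2 * Real.pi * Complex.I * ((∑ i, lam i * t i : ℝ) : ℂ))
                * fderiv ℝ g t (EuclideanSpace.single ℓ 1)‖) := by
  obtain ⟨n, rfl⟩ := Nat.exists_eq_add_one_of_ne_zero ℓ.pos.ne'
  set A := innerSL ℝ lam
  have hphase : ∀ t : EuclideanSpace ℝ (Fin (n + 1)), ∑ i, lam i * t i = A t := fun t ↦ by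
    simp [A, PiLp.inner_apply, mul_comm]
  have hface : ∀ v, |v| ≤ R → ‖cubeFaceIntegral R ℓ v
      (fun t ↦ Complex.exp (2 * Real.pi * Complex.I * A t) * g t)‖
        ≤ (2 * R) ^ n * ⨆ t ∈ cube (n + 1) R, ‖g t‖ := fun v hv ↦
    norm_cubeFaceIntegral_le (fun t ht ↦ by
      simpa [Complex.norm_exp] using
        (isCompact_cube _ _).le_biSup_of_continuousOn hg.continuous.norm.continuousOn ht) hv ℓ
  have hc :
      ‖2 * Real.pi * Complex.I * A (EuclideanSpace.single ℓ 1)‖ = 2 * Real.pi * |lam ℓ| := by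
    simp [A, EuclideanSpace.inner_single_right, abs_of_pos Real.pi_pos]
  simp only [hphase]
  rw [Nat.add_sub_cancel, one_div, inv_mul_eq_div, le_div_iff₀ (by positivity), ← hc, mul_comm,
    ← norm_mul, mul_setIntegral_cube_cexp_mul hR.le hg]
  refine (norm_sub_le _ _).trans ?_
  gcongr
  refine (norm_sub_le _ _).trans ?_
  linarith [hface R (abs_of_pos hR).le, hface (-R) (by rw [abs_neg, abs_of_pos hR])]

/-- One integration by parts for twisted integrals: if `λ_ℓ ≠ 0`, the twisted integral of a
`C¹` function `g` is bounded by `(1/(2π|λ_ℓ|))` times a boundary term plus the twisted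
integral of `∂g/∂t_ℓ`. -/
theorem twisted_integral_integration_by_parts
    {d : ℕ} (hd : 1 ≤ d) (g : EuclideanSpace ℝ (Fin d) → ℂ)
    (hg : ContDiff ℝ 1 g) (lam : EuclideanSpace ℝ (Fin d)) (ℓ : Fin d)
    (hℓ : lam ℓ ≠ 0) (R : ℝ) (hR : 0 < R) :
    ‖∫ t in cube d R,
        Complex.exp (2 * Real.pi * Complex.I * ((∑ i, lam i * t i : ℝ) : ℂ)) * g t‖
      ≤ (1 / (2 * Real.pi * |lam ℓ|)) *
        (2 * (2 * R) ^ (d - 1) * (⨆ t ∈ cube d R, ‖g t‖)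
          + ‖∫ t in cube d R,
              Complex.exp (2 * Real.pi * Complex.I * ((∑ i, lam i * t i : ℝ) : ℂ))
                * fderiv ℝ g t (EuclideanSpace.single ℓ 1)‖) :=
  twisted_integral_integration_by_parts_general g hg lam ℓ hℓ R hR
end
end

section
/- Let d ≥ 1, let v = (v_1, …, v_d) : ℝ^d → ℂ^d be continuously differentiable, let λ ∈ ℝ^d, let R > 0 and let M ≥ sup_{x ∈ C_R(0)} max_{1 ≤ ℓ ≤ d} |v_ℓ(x)|. Then |∫_{C_R(0)} e^{2πi⟨λ,x⟩} ( ∑_{ℓ=1}^d (∂v_ℓ/∂x_ℓ)(x) + 2πi ∑_{ℓ=1}^d λ_ℓ v_ℓ(x) ) dx| ≤ 2d (2R)^{d−1} M. -/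
open MeasureTheory

noncomputable section

/-!
The integrand is the divergence of the twisted field `x ↦ e^{2πi⟨λ,x⟩} v(x)`. By the divergence
theorem its integral over the cube is a sum of `2d` face integrals of components of that field;
these are bounded by `M` because the phase has modulus one, and each face has volume `(2R)^{d-1}`.
-/

open Set Complex Real

theorem norm_setIntegral_Icc_divergence_le {E : Type*} [NormedAddCommGroup E] [NormedSpace ℝ E]
    {n : ℕ} {a b : Fin (n + 1) → ℝ} (hle : a ≤ b) {f : Fin (n + 1) → (Fin (n + 1) → ℝ) → E}
    {f' : Fin (n + 1) → (Fin (n + 1) → ℝ) → (Fin (n + 1) → ℝ) →L[ℝ] E}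
    (hfc : ∀ i, ContinuousOn (f i) (Icc a b))
    (hf' : ∀ x ∈ univ.pi fun i => Ioo (a i) (b i), ∀ i, HasFDerivAt (f i) (f' i x) x)
    (hdiv : IntegrableOn (fun x => ∑ i, f' i x (Pi.single i 1)) (Icc a b))
    {M : ℝ} (hM : ∀ x ∈ Icc a b, ∀ i, ‖f i x‖ ≤ M) :
    ‖∫ x in Icc a b, ∑ i, f' i x (Pi.single i 1)‖ ≤
      ∑ i : Fin (n + 1), 2 * (∏ j, (b (i.succAbove j) - a (i.succAbove j))) * M := by
  have hface : ∀ i, ∀ c ∈ Icc (a i) (b i),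
      ‖∫ y in Icc (a ∘ i.succAbove) (b ∘ i.succAbove), f i (i.insertNth c y)‖ ≤
        (∏ j, (b (i.succAbove j) - a (i.succAbove j))) * M := by
    intro i c hc
    have hvol : volume.real (Icc (a ∘ i.succAbove) (b ∘ i.succAbove)) =
        ∏ j, (b (i.succAbove j) - a (i.succAbove j)) := by
      simp [measureReal_def, Real.volume_Icc_pi, ENNReal.toReal_prod, fun j => sub_nonneg.2 (hle j)]
    calc _ ≤ M * volume.real (Icc (a ∘ i.succAbove) (b ∘ i.succAbove)) :=
          norm_setIntegral_le_of_norm_le_const measure_Icc_lt_top fun y hy =>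
            hM _ (Fin.insertNth_mem_Icc.2 ⟨hc, hy⟩) i
      _ = _ := by rw [hvol, mul_comm]
  rw [integral_divergence_of_hasFDerivAt_off_countable' a b hle f f' ∅ countable_empty hfc
    (fun x hx => hf' x hx.1) hdiv]
  refine (norm_sum_le _ _).trans (Finset.sum_le_sum fun i _ => ?_)
  calc _ ≤ _ := norm_sub_le _ _
    _ ≤ _ := add_le_add (hface i _ ⟨hle i, le_rfl⟩) (hface i _ ⟨le_rfl, hle i⟩)
    _ = _ := by ring

theorem preimage_toLp_cube (d : ℕ) (R : ℝ) :
    WithLp.toLp 2 ⁻¹' cube d R = Icc (fun _ => -R) (fun _ => R) := by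
  ext y
  simp [cube, abs_le, forall_and, Pi.le_def]

theorem norm_setIntegral_cube_divergence_le {E : Type*} [NormedAddCommGroup E] [NormedSpace ℝ E]
    {n : ℕ} {R : ℝ} (hR : 0 ≤ R) {F : Fin (n + 1) → EuclideanSpace ℝ (Fin (n + 1)) → E}
    {F' : Fin (n + 1) → EuclideanSpace ℝ (Fin (n + 1)) → EuclideanSpace ℝ (Fin (n + 1)) →L[ℝ] E}
    (hFc : ∀ i, ContinuousOn (F i) (cube (n + 1) R))
    (hF' : ∀ x ∈ cube (n + 1) R, ∀ i, HasFDerivAt (F i) (F' i x) x)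
    (hdiv : ContinuousOn (fun x => ∑ i, F' i x (EuclideanSpace.single i 1)) (cube (n + 1) R))
    {M : ℝ} (hM : ∀ x ∈ cube (n + 1) R, ∀ i, ‖F i x‖ ≤ M) :
    ‖∫ x in cube (n + 1) R, ∑ i, F' i x (EuclideanSpace.single i 1)‖ ≤
      2 * (n + 1) * (2 * R) ^ n * M := by
  set e : (Fin (n + 1) → ℝ) ≃L[ℝ] EuclideanSpace ℝ (Fin (n + 1)) :=
    (EuclideanSpace.equiv _ ℝ).symm
  have hmaps : MapsTo e (Icc (fun _ => -R) fun _ => R) (cube (n + 1) R) := fun y hy => by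
    rwa [← preimage_toLp_cube] at hy
  have hint : ∫ x in cube (n + 1) R, ∑ i, F' i x (EuclideanSpace.single i 1) =
      ∫ y in Icc (fun _ => -R) (fun _ => R),
        ∑ i, (F' i (e y)).comp e.toContinuousLinearMap (Pi.single i 1) := by
    rw [← preimage_toLp_cube]
    exact ((PiLp.volume_preserving_toLp _).setIntegral_preimage_emb
      (MeasurableEquiv.toLp 2 _).measurableEmbedding _ _).symm
  have hbox := norm_setIntegral_Icc_divergence_le (fun _ => by linarith)
    (f := fun i => F i ∘ e) (f' := fun i y => (F' i (e y)).comp e.toContinuousLinearMap)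
    (fun i => (hFc i).comp e.continuous.continuousOn hmaps)
    (fun y hy i => (hF' _ (hmaps (Ioo_subset_Icc_self (pi_univ_Ioo_subset _ _ hy))) i).comp y
      e.hasFDerivAt)
    ((hdiv.comp e.continuous.continuousOn hmaps).integrableOn_compact isCompact_Icc)
    (fun y hy i => hM _ (hmaps hy) i)
  rw [hint]
  convert hbox using 1
  simp only [sub_neg_eq_add, Finset.prod_const, Finset.card_univ, Fintype.card_fin,
    Finset.sum_const, nsmul_eq_mul, Nat.cast_add, Nat.cast_one]
  ring

theorem EuclideanSpace.real_inner_eq_sum_mul {ι : Type*} [Fintype ι] (x y : EuclideanSpace ℝ ι) :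
    inner ℝ x y = ∑ i, x i * y i := by
  simp [PiLp.inner_apply, mul_comm]

section FourierPhase

variable {ι : Type*} [Fintype ι] (lam : EuclideanSpace ℝ ι)

def fourierPhase (x : EuclideanSpace ℝ ι) : ℂ :=
  cexp (2 * π * I * (inner ℝ lam x : ℂ))

theorem norm_fourierPhase (x : EuclideanSpace ℝ ι) : ‖fourierPhase lam x‖ = 1 := by
  rw [fourierPhase, ← Complex.norm_exp_ofReal_mul_I (2 * π * inner ℝ lam x)]
  congr 2
  push_cast
  ring

theorem hasFDerivAt_fourierPhase (x : EuclideanSpace ℝ ι) :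
    HasFDerivAt (fourierPhase lam)
      (fourierPhase lam x • (2 * π * I) • ofRealCLM.comp (innerSL ℝ lam)) x :=
  ((ofRealCLM.comp (innerSL ℝ lam)).hasFDerivAt.const_mul (2 * π * I)).cexp

theorem HasFDerivAt.fourierPhase_mul {g : EuclideanSpace ℝ ι → ℂ}
    {g' : EuclideanSpace ℝ ι →L[ℝ] ℂ} {x : EuclideanSpace ℝ ι} (hg : HasFDerivAt g g' x) :
    HasFDerivAt (fun y => fourierPhase lam y * g y)
      (fourierPhase lam x • (g' + (2 * π * I * g x) • ofRealCLM.comp (innerSL ℝ lam))) x := by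
  refine ((hasFDerivAt_fourierPhase lam x).mul hg).congr_fderiv ?_
  rw [smul_add, smul_smul, smul_smul, smul_smul]
  congr 2
  ring

theorem sum_fourierPhase_smul_apply_single [DecidableEq ι] (x : EuclideanSpace ℝ ι)
    (g : ι → ℂ) (G : ι → EuclideanSpace ℝ ι →L[ℝ] ℂ) :
    ∑ i, (fourierPhase lam x • (G i + (2 * π * I * g i) • ofRealCLM.comp (innerSL ℝ lam)))
        (EuclideanSpace.single i 1) =
      fourierPhase lam x *
        (∑ i, G i (EuclideanSpace.single i 1) + 2 * π * I * ∑ i, lam i * g i) := by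
  simp only [smul_add, add_apply, smul_apply, smul_eq_mul, ContinuousLinearMap.comp_apply,
    coe_innerSL_apply, EuclideanSpace.inner_single_right, ringHom_apply, one_mul,
    ofRealCLM_apply, Finset.sum_add_distrib, Finset.mul_sum, mul_add, add_right_inj]
  exact Finset.sum_congr rfl fun i _ => by ring

end FourierPhase

theorem twisted_divergence_boundary_bound_general
    {d : ℕ} (v : EuclideanSpace ℝ (Fin d) → Fin d → ℂ)
    (hv : ContDiff ℝ 1 v) (lam : EuclideanSpace ℝ (Fin d)) (R : ℝ) (hR : 0 < R)
    (M : ℝ) (hM : ∀ x ∈ cube d R, ∀ ℓ, ‖v x ℓ‖ ≤ M) :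
    ‖∫ x in cube d R,
        Complex.exp (2 * Real.pi * Complex.I * ((∑ i, lam i * x i : ℝ) : ℂ)) *
          ((∑ ℓ, fderiv ℝ (fun y => v y ℓ) x (EuclideanSpace.single ℓ 1))
            + 2 * Real.pi * Complex.I * ∑ ℓ, ((lam ℓ : ℝ) : ℂ) * v x ℓ)‖
      ≤ 2 * d * (2 * R) ^ (d - 1) * M := by
  cases d with
  | zero => simp
  | succ n =>
  have hvℓ : ∀ ℓ, ContDiff ℝ 1 fun y => v y ℓ := contDiff_pi.1 hv
  set F' := fun ℓ x => fourierPhase lam x •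
    (fderiv ℝ (fun y => v y ℓ) x + (2 * π * I * v x ℓ) • ofRealCLM.comp (innerSL ℝ lam))
  have hF : ∀ ℓ x, HasFDerivAt (fun y => fourierPhase lam y * v y ℓ) (F' ℓ x) x := fun ℓ x =>
    ((hvℓ ℓ).differentiable one_ne_zero x).hasFDerivAt.fourierPhase_mul lam
  have hdiv : ∀ x, ∑ ℓ, F' ℓ x (EuclideanSpace.single ℓ 1) =
      cexp (2 * π * I * ((∑ i, lam i * x i : ℝ) : ℂ)) *
        ((∑ ℓ, fderiv ℝ (fun y => v y ℓ) x (EuclideanSpace.single ℓ 1))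
          + 2 * π * I * ∑ ℓ, ((lam ℓ : ℝ) : ℂ) * v x ℓ) := fun x => by
    rw [sum_fourierPhase_smul_apply_single, fourierPhase, EuclideanSpace.real_inner_eq_sum_mul]
  have hcont : Continuous fun x => ∑ ℓ, F' ℓ x (EuclideanSpace.single ℓ 1) := by
    simp_rw [hdiv]
    fun_prop
  calc _ = ‖∫ x in cube (n + 1) R, ∑ ℓ, F' ℓ x (EuclideanSpace.single ℓ 1)‖ := by simp_rw [hdiv]
    _ ≤ 2 * (n + 1) * (2 * R) ^ n * M :=
      norm_setIntegral_cube_divergence_le hR.le (F := fun ℓ x => fourierPhase lam x * v x ℓ)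
        (fun ℓ x _ => (hF ℓ x).continuousAt.continuousWithinAt) (fun x _ ℓ => hF ℓ x)
        hcont.continuousOn
        (fun x hx ℓ => by rw [norm_mul, norm_fourierPhase, one_mul]; exact hM x hx ℓ)
    _ = _ := by push_cast; ring

/-- Divergence-theorem estimate: the twisted integral of the divergence-type expression
`∑_ℓ ∂v_ℓ/∂x_ℓ + 2πi ∑_ℓ λ_ℓ v_ℓ` over the cube is bounded by the surface term
`2d (2R)^{d-1} M`, where `M` bounds the components of `v` on the cube. -/
theorem twisted_divergence_boundary_bound
    {d : ℕ} (hd : 1 ≤ d) (v : EuclideanSpace ℝ (Fin d) → Fin d → ℂ)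
    (hv : ContDiff ℝ 1 v) (lam : EuclideanSpace ℝ (Fin d)) (R : ℝ) (hR : 0 < R)
    (M : ℝ) (hM : ∀ x ∈ cube d R, ∀ ℓ, ‖v x ℓ‖ ≤ M) :
    ‖∫ x in cube d R,
        Complex.exp (2 * Real.pi * Complex.I * ((∑ i, lam i * x i : ℝ) : ℂ)) *
          ((∑ ℓ, fderiv ℝ (fun y => v y ℓ) x (EuclideanSpace.single ℓ 1))
            + 2 * Real.pi * Complex.I * ∑ ℓ, ((lam ℓ : ℝ) : ℂ) * v x ℓ)‖
      ≤ 2 * d * (2 * R) ^ (d - 1) * M :=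
  twisted_divergence_boundary_bound_general v hv lam R hR M hM
end
end

section
/- Let d ≥ 1, γ > 0, η > 0 and B > 1. Let g : ℝ^d → ℂ be a bounded measurable function and suppose there are measurable functions g_y : ℝ^d → ℂ for y ∈ ℕ, and constants K > 0, C > 0 and y₀ ∈ ℕ, such that for every y ≥ y₀: (i) sup_{t ∈ ℝ^d} |g(t) − g_y(t)| ≤ K e^{−ηy/2}, and (ii) for every λ ∈ ℝ^d with 0 < ‖λ‖ ≤ B and every R ≥ e^{ηy/γ}, |∫_{C_R(0)} e^{−2πi⟨λ,t⟩} g_y(t) dt| ≤ C R^{d−γ/2}. Then there exist C' > 0 and R₁ > 0 such that for every λ with 0 < ‖λ‖ ≤ B and every R > R₁, |∫_{C_R(0)} e^{−2πi⟨λ,t⟩} g(t) dt| ≤ C' R^{d−γ/2}. -/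
/-! For `R ≈ e^{ηy/γ}` the approximation error `K e^{-ηy/2}` is `≈ K R^{-γ/2}`, so integrating it
over the cube of volume `(2R)^d` costs `O(R^{d-γ/2})`, the same order as the assumed bound for
`g_y`. Hence for each large `R` take the largest level `y` with `e^{ηy/γ} ≤ R` and compare the
twisted integrals of `g` and `g_y`. -/

open MeasureTheory

noncomputable section

section Cube

variable (d : ℕ) (R : ℝ)

theorem cube_eq_preimage_pi :
    cube d R = (MeasurableEquiv.toLp 2 (Fin d → ℝ)).symm ⁻¹'
      Set.univ.pi fun _ => Set.Icc (-R) R := by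
  ext t
  simp [cube, abs_le, Pi.le_def, forall_and]

theorem measurableSet_cube : MeasurableSet (cube d R) := by
  rw [cube_eq_preimage_pi]
  exact (MeasurableEquiv.toLp 2 _).symm.measurable
    (MeasurableSet.univ_pi fun _ => measurableSet_Icc)

theorem volume_cube : volume (cube d R) = ENNReal.ofReal (2 * R) ^ d := by
  rw [cube_eq_preimage_pi,
    (EuclideanSpace.volume_preserving_symm_measurableEquiv_toLp (Fin d)).measure_preimage
      (MeasurableSet.univ_pi fun _ => measurableSet_Icc).nullMeasurableSet,
    volume_pi_pi]
  simp [Real.volume_Icc, two_mul]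

theorem volume_cube_lt_top : volume (cube d R) < ⊤ := by
  rw [volume_cube]
  exact ENNReal.pow_lt_top ENNReal.ofReal_lt_top

theorem volume_real_cube (hR : 0 ≤ R) : volume.real (cube d R) = (2 * R) ^ d := by
  rw [measureReal_def, volume_cube, ENNReal.toReal_pow, ENNReal.toReal_ofReal (by positivity)]

end Cube

theorem norm_exp_neg_two_pi_I_mul_ofReal (r : ℝ) :
    ‖Complex.exp (-(2 * Real.pi * Complex.I) * (r : ℂ))‖ = 1 := by
  rw [show -(2 * Real.pi * Complex.I) * (r : ℂ) = ((-(2 * Real.pi * r) : ℝ) : ℂ) * Complex.I by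
    push_cast; ring]
  exact Complex.norm_exp_ofReal_mul_I _

theorem norm_setIntegral_le_add_of_norm_sub_le {α E : Type*} [MeasurableSpace α]
    [NormedAddCommGroup E] [NormedSpace ℝ E] {μ : Measure α} {s : Set α} (hsm : MeasurableSet s)
    (hs : μ s < ⊤) {f h : α → E} (hh : AEStronglyMeasurable h (μ.restrict s)) {ε : ℝ} (hε : 0 ≤ ε)
    (hfh : ∀ t ∈ s, ‖f t - h t‖ ≤ ε) :
    ‖∫ t in s, f t ∂μ‖ ≤ ‖∫ t in s, h t ∂μ‖ + ε * μ.real s := by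
  by_cases hf : IntegrableOn f s μ
  · have : IsFiniteMeasure (μ.restrict s) := isFiniteMeasure_restrict.2 hs.ne
    have hdiff : IntegrableOn (f - h) s μ :=
      Integrable.of_bound (hf.aestronglyMeasurable.sub hh) ε (ae_restrict_of_forall_mem hsm hfh)
    calc ‖∫ t in s, f t ∂μ‖ = ‖(∫ t in s, h t ∂μ) + ∫ t in s, (f - h) t ∂μ‖ := by
          have hh' : IntegrableOn h s μ := by simpa using hf.sub hdiff
          rw [← integral_add hh' hdiff]
          simp
      _ ≤ ‖∫ t in s, h t ∂μ‖ + ε * μ.real s :=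
          (norm_add_le _ _).trans (add_le_add_right (norm_setIntegral_le_of_norm_le_const hs hfh) _)
  · rw [integral_undef hf, norm_zero]
    positivity

theorem exists_nat_exp_le_and_exp_neg_le {γ η : ℝ} (hγ : 0 < γ) (hη : 0 < η) (y₀ : ℕ) {R : ℝ}
    (hR : Real.exp (η * (y₀ + 1) / γ) < R) :
    ∃ y : ℕ, y₀ ≤ y ∧ Real.exp (η * y / γ) ≤ R ∧
      Real.exp (-(η * y) / 2) ≤ Real.exp (η / 2) * R ^ (-(γ / 2)) := by
  obtain ⟨x, rfl⟩ : ∃ x : ℝ, R = Real.exp (η * x / γ) :=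
    ⟨γ * Real.log R / η, by
      rw [show η * (γ * Real.log R / η) / γ = Real.log R by field_simp,
        Real.exp_log ((Real.exp_pos _).trans hR)]⟩
  have hx : (y₀ : ℝ) + 1 < x := by
    rw [Real.exp_lt_exp, div_lt_div_iff_of_pos_right hγ] at hR
    exact lt_of_mul_lt_mul_left hR hη.le
  refine ⟨⌊x⌋₊, (Nat.le_succ y₀).trans (Nat.le_floor (by push_cast; linarith)), ?_, ?_⟩
  · gcongr
    exact Nat.floor_le (by linarith [y₀.cast_nonneg (α := ℝ)])
  · rw [← Real.exp_mul, ← Real.exp_add, Real.exp_le_exp]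
    have := Nat.lt_floor_add_one x
    field_simp
    nlinarith

theorem twisted_integral_interpolation_general
    {d : ℕ} (γ η B : ℝ) (hγ : 0 < γ) (hη : 0 < η)
    (g : EuclideanSpace ℝ (Fin d) → ℂ)
    (gs : ℕ → EuclideanSpace ℝ (Fin d) → ℂ) (hgs : ∀ y, Measurable (gs y))
    (K C : ℝ) (hK : 0 < K) (hC : 0 < C) (y₀ : ℕ)
    (happrox : ∀ y, y₀ ≤ y → ∀ t, ‖g t - gs y t‖ ≤ K * Real.exp (-(η * y) / 2))
    (htwist : ∀ y, y₀ ≤ y → ∀ lam : EuclideanSpace ℝ (Fin d), 0 < ‖lam‖ → ‖lam‖ ≤ B →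
      ∀ R : ℝ, Real.exp (η * y / γ) ≤ R →
        ‖∫ t in cube d R,
            Complex.exp (-(2 * Real.pi * Complex.I) * ((∑ i, lam i * t i : ℝ) : ℂ))
              * gs y t‖
          ≤ C * R ^ ((d : ℝ) - γ / 2)) :
    ∃ C' > 0, ∃ R₁ > 0, ∀ lam : EuclideanSpace ℝ (Fin d), 0 < ‖lam‖ → ‖lam‖ ≤ B →
      ∀ R : ℝ, R₁ < R →
        ‖∫ t in cube d R,
            Complex.exp (-(2 * Real.pi * Complex.I) * ((∑ i, lam i * t i : ℝ) : ℂ))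
              * g t‖
          ≤ C' * R ^ ((d : ℝ) - γ / 2) := by
  refine ⟨C + K * Real.exp (η / 2) * 2 ^ d, by positivity,
    Real.exp (η * (y₀ + 1) / γ), Real.exp_pos _, fun lam hlam hlamB R hR => ?_⟩
  obtain ⟨y, hy₀, hyR, hε⟩ := exists_nat_exp_le_and_exp_neg_le hγ hη y₀ hR
  have hR0 : 0 < R := (Real.exp_pos _).trans hR
  have hphase : Measurable fun t : EuclideanSpace ℝ (Fin d) =>
      Complex.exp (-(2 * Real.pi * Complex.I) * ((∑ i, lam i * t i : ℝ) : ℂ)) := by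
    fun_prop
  calc _ ≤ ‖∫ t in cube d R,
            Complex.exp (-(2 * Real.pi * Complex.I) * ((∑ i, lam i * t i : ℝ) : ℂ)) * gs y t‖
          + K * Real.exp (-(η * y) / 2) * volume.real (cube d R) :=
        norm_setIntegral_le_add_of_norm_sub_le (measurableSet_cube d R) (volume_cube_lt_top d R)
          (hphase.mul (hgs y)).aestronglyMeasurable (by positivity) fun t _ => by
            rw [Pi.mul_apply, ← mul_sub, norm_mul, norm_exp_neg_two_pi_I_mul_ofReal, one_mul]
            exact happrox y hy₀ t
    _ ≤ C * R ^ ((d : ℝ) - γ / 2) + K * (Real.exp (η / 2) * R ^ (-(γ / 2))) * (2 * R) ^ d := by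
        rw [volume_real_cube d R hR0.le]
        gcongr
        exact htwist y hy₀ lam hlam hlamB R hyR
    _ = (C + K * Real.exp (η / 2) * 2 ^ d) * R ^ ((d : ℝ) - γ / 2) := by
        rw [mul_pow, Real.rpow_sub hR0, Real.rpow_neg hR0.le, Real.rpow_natCast]
        field_simp

/-- Interpolation of twisted-integral bounds: if `g` is uniformly approximated by functions
`gs y` with error `K e^{-ηy/2}` and each `gs y` has twisted integrals bounded by
`C R^{d-γ/2}` for `R ≥ e^{ηy/γ}` and spectral parameters `0 < ‖λ‖ ≤ B`, then `g` itself has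
twisted integrals bounded by `C' R^{d-γ/2}` for all large `R` and the same parameters. -/
theorem twisted_integral_interpolation
    {d : ℕ} (hd : 1 ≤ d) (γ η B : ℝ) (hγ : 0 < γ) (hη : 0 < η) (hB : 1 < B)
    (g : EuclideanSpace ℝ (Fin d) → ℂ) (hg : Measurable g) (hgb : ∃ M, ∀ t, ‖g t‖ ≤ M)
    (gs : ℕ → EuclideanSpace ℝ (Fin d) → ℂ) (hgs : ∀ y, Measurable (gs y))
    (K C : ℝ) (hK : 0 < K) (hC : 0 < C) (y₀ : ℕ)
    (happrox : ∀ y, y₀ ≤ y → ∀ t, ‖g t - gs y t‖ ≤ K * Real.exp (-(η * y) / 2))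
    (htwist : ∀ y, y₀ ≤ y → ∀ lam : EuclideanSpace ℝ (Fin d), 0 < ‖lam‖ → ‖lam‖ ≤ B →
      ∀ R : ℝ, Real.exp (η * y / γ) ≤ R →
        ‖∫ t in cube d R,
            Complex.exp (-(2 * Real.pi * Complex.I) * ((∑ i, lam i * t i : ℝ) : ℂ))
              * gs y t‖
          ≤ C * R ^ ((d : ℝ) - γ / 2)) :
    ∃ C' > 0, ∃ R₁ > 0, ∀ lam : EuclideanSpace ℝ (Fin d), 0 < ‖lam‖ → ‖lam‖ ≤ B →
      ∀ R : ℝ, R₁ < R →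
        ‖∫ t in cube d R,
            Complex.exp (-(2 * Real.pi * Complex.I) * ((∑ i, lam i * t i : ℝ) : ℂ))
              * g t‖
          ≤ C' * R ^ ((d : ℝ) - γ / 2) :=
  twisted_integral_interpolation_general γ η B hγ hη g gs hgs K C hK hC y₀ happrox htwist
end
end
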